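/- If a function 𝓜 on pairs of states (second argument full rank) is additive and satisfies the data-processing inequality 𝓜(T(ρ),T(σ)) ≤ 𝓜(ρ,σ) for all quantum channels T, then the induced measure M_β(ρ,H) := 𝓜(ρ, ω_{β,H}) is catalytically monotone: whenever a Gibbs-preserving channel G satisfies G(ω_{β,H}⊗ω_{β,R}) = ω_{β,K}⊗ω_{β,R} and G(ρ⊗γ) = σ⊗γ for some catalyst state γ, then M_β(σ,K) ≤ M_β(ρ,H). -/

import Mathlib

open Matrix
open scoped Kronecker ComplexOrder

noncomputable section

/-- Matrix logarithm via spectral decomposition (0 for non-Hermitian input). -/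
def mlog {d : Type*} [Fintype d] [DecidableEq d] (A : Matrix d d ℂ) : Matrix d d ℂ :=
  if h : A.IsHermitian then
    (h.eigenvectorUnitary : Matrix d d ℂ) *
      Matrix.diagonal (fun i => (Real.log (h.eigenvalues i) : ℂ)) *
      (star (h.eigenvectorUnitary : Matrix d d ℂ))
  else 0

/-- Quantum relative entropy S(ρ‖σ) = Tr(ρ log ρ − ρ log σ). -/
def relEnt {d : Type*} [Fintype d] [DecidableEq d] (ρ σ : Matrix d d ℂ) : ℝ :=
  (Matrix.trace (ρ * mlog ρ - ρ * mlog σ)).re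

/-- Von Neumann entropy S(ρ) = −Tr(ρ log ρ). -/
def vnEnt {d : Type*} [Fintype d] [DecidableEq d] (ρ : Matrix d d ℂ) : ℝ :=
  -(Matrix.trace (ρ * mlog ρ)).re

/-- ρ is a density operator. -/
def IsDensity {d : Type*} [Fintype d] (ρ : Matrix d d ℂ) : Prop :=
  ρ.PosSemidef ∧ ρ.trace = 1

/-- Full-rank density operator. -/
def IsFaithfulState {d : Type*} [Fintype d] (σ : Matrix d d ℂ) : Prop :=
  σ.PosDef ∧ σ.trace = 1

/-- Apply a linear map blockwise (i.e. (id_k ⊗ T)). -/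
def blockApply {d e : Type*} [Fintype d] [DecidableEq d] [Fintype e] [DecidableEq e]
    (T : Matrix d d ℂ →ₗ[ℂ] Matrix e e ℂ) {k : Type*}
    (M : Matrix (k × d) (k × d) ℂ) : Matrix (k × e) (k × e) ℂ :=
  Matrix.of fun p q => T (Matrix.of fun i j => M (p.1, i) (q.1, j)) p.2 q.2

/-- Quantum channel: trace preserving and completely positive. -/
def IsQChannel {d e : Type*} [Fintype d] [DecidableEq d] [Fintype e] [DecidableEq e]
    (T : Matrix d d ℂ →ₗ[ℂ] Matrix e e ℂ) : Prop :=
  (∀ M : Matrix d d ℂ, (T M).trace = M.trace) ∧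
  (∀ (k : Type) [Fintype k] [DecidableEq k] (M : Matrix (k × d) (k × d) ℂ),
      M.PosSemidef → (blockApply T M).PosSemidef)

/-- Gibbs state ω_{β,H} = e^{−βH}/Tr e^{−βH}. -/
def gibbs {d : Type*} [Fintype d] [DecidableEq d] (β : ℝ) (H : Matrix d d ℂ) :
    Matrix d d ℂ :=
  (Matrix.trace (NormedSpace.exp ((-β : ℂ) • H)))⁻¹ • NormedSpace.exp ((-β : ℂ) • H)

/-- Non-equilibrium free energy difference ΔF_β(ρ,H) = (1/β) S(ρ‖ω_{β,H}). -/
def dF {d : Type*} [Fintype d] [DecidableEq d] (β : ℝ) (ρ H : Matrix d d ℂ) : ℝ :=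
  (1 / β) * relEnt ρ (gibbs β H)

/-- Partial trace over the second factor. -/
def ptraceRight {d₁ d₂ : Type*} [Fintype d₂]
    (M : Matrix (d₁ × d₂) (d₁ × d₂) ℂ) : Matrix d₁ d₁ ℂ :=
  Matrix.of fun i j => ∑ k, M (i, k) (j, k)

/-- Partial trace over the first factor. -/
def ptraceLeft {d₁ d₂ : Type*} [Fintype d₁]
    (M : Matrix (d₁ × d₂) (d₁ × d₂) ℂ) : Matrix d₂ d₂ ℂ :=
  Matrix.of fun i j => ∑ k, M (k, i) (k, j)

/-- n-fold tensor power of a matrix. -/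
def tpow {d : Type*} [Fintype d] (ρ : Matrix d d ℂ) (n : ℕ) :
    Matrix (Fin n → d) (Fin n → d) ℂ :=
  Matrix.of fun a b => ∏ i, ρ (a i) (b i)

/-- Tensor product of a finite family of matrices. -/
def tprodFam {k : ℕ} {c : Type*} [Fintype c] (γ : Fin k → Matrix c c ℂ) :
    Matrix (Fin k → c) (Fin k → c) ℂ :=
  Matrix.of fun a b => ∏ i, γ i (a i) (b i)

/-- Single-site marginal at site i of a state on an n-fold tensor product. -/
def marginal {d : Type*} [Fintype d] [DecidableEq d] {n : ℕ}
    (M : Matrix (Fin n → d) (Fin n → d) ℂ) (i : Fin n) : Matrix d d ℂ :=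
  Matrix.of fun a b => ∑ g : {j : Fin n // j ≠ i} → d,
    M (fun j => if h : j = i then a else g ⟨j, h⟩)
      (fun j => if h : j = i then b else g ⟨j, h⟩)

/-- Trace norm of a matrix: sum of singular values. -/
def traceNorm {d : Type*} [Fintype d] [DecidableEq d] (A : Matrix d d ℂ) : ℝ :=
  ∑ i, Real.sqrt ((Matrix.posSemidef_conjTranspose_mul_self A).1.eigenvalues i)

/-! Data processing for `G` on `ρ ⊗ γ` against `ω_{β,H} ⊗ ω_{β,R}`, split by additivity, leaves the
real-valued catalyst term on both sides. To invoke additivity one must know that the Gibbs states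
are faithful and that `σ` is a state; the latter is read off `σ ⊗ γ = G (ρ ⊗ γ)` by a partial trace. -/

lemma IsDensity.nonempty {d : Type*} [Fintype d] {ρ : Matrix d d ℂ} (hρ : IsDensity ρ) :
    Nonempty d := by
  by_contra h
  rw [not_nonempty_iff] at h
  simpa [Matrix.trace] using hρ.2

section Kronecker

variable {d₁ d₂ : Type*} [Fintype d₁] [Fintype d₂] {A : Matrix d₁ d₁ ℂ} {B : Matrix d₂ d₂ ℂ}

lemma IsDensity.kronecker (hA : IsDensity A) (hB : IsDensity B) : IsDensity (A ⊗ₖ B) :=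
  ⟨hA.1.kronecker hB.1, by rw [trace_kronecker, hA.2, hB.2, mul_one]⟩

lemma IsFaithfulState.kronecker (hA : IsFaithfulState A) (hB : IsFaithfulState B) :
    IsFaithfulState (A ⊗ₖ B) :=
  ⟨hA.1.kronecker hB.1, by rw [trace_kronecker, hA.2, hB.2, mul_one]⟩

end Kronecker

lemma Matrix.IsHermitian.posDef_exp {d : Type*} [Fintype d] [DecidableEq d]
    {A : Matrix d d ℂ} (hA : A.IsHermitian) : (NormedSpace.exp A).PosDef := by
  set B := NormedSpace.exp ((2⁻¹ : ℝ) • A)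
  have hB : Bᴴ = B := (hA.smul (IsSelfAdjoint.all (2⁻¹ : ℝ))).exp
  have hsquare : NormedSpace.exp A = Bᴴ * B := by
    rw [hB, ← Matrix.exp_add_of_commute _ _ (Commute.refl _), ← add_smul]
    norm_num
  rw [hsquare]
  exact .conjTranspose_mul_self B (mulVec_injective_iff_isUnit.2 (isUnit_exp _))

lemma isFaithfulState_gibbs {d : Type*} [Fintype d] [DecidableEq d] [Nonempty d]
    (β : ℝ) {H : Matrix d d ℂ} (hH : H.IsHermitian) : IsFaithfulState (gibbs β H) := by
  have hexp : (NormedSpace.exp ((-β : ℂ) • H)).PosDef :=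
    (hH.smul (k := (-β : ℂ)) (by simp [IsSelfAdjoint])).posDef_exp
  have hZ := hexp.trace_pos
  exact ⟨hexp.smul (inv_pos.2 hZ), by rw [gibbs, trace_smul, smul_eq_mul, inv_mul_cancel₀ hZ.ne']⟩

section PartialTrace

variable {d₁ d₂ : Type*} [Fintype d₂]

lemma ptraceRight_eq_sum_submatrix (M : Matrix (d₁ × d₂) (d₁ × d₂) ℂ) :
    ptraceRight M = ∑ k, M.submatrix (fun i => (i, k)) (fun i => (i, k)) := by
  ext i j
  simp [ptraceRight, Matrix.sum_apply]

lemma Matrix.PosSemidef.ptraceRight [Fintype d₁] {M : Matrix (d₁ × d₂) (d₁ × d₂) ℂ}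
    (hM : M.PosSemidef) : (ptraceRight M).PosSemidef := by
  rw [ptraceRight_eq_sum_submatrix]
  exact posSemidef_sum _ fun k _ => hM.submatrix _

lemma ptraceRight_kronecker (A : Matrix d₁ d₁ ℂ) (B : Matrix d₂ d₂ ℂ) :
    ptraceRight (A ⊗ₖ B) = B.trace • A := by
  ext i j
  simp [ptraceRight, Matrix.trace, Finset.mul_sum, mul_comm]

lemma IsDensity.of_kronecker_right [Fintype d₁] {A : Matrix d₁ d₁ ℂ} {B : Matrix d₂ d₂ ℂ}
    (hAB : IsDensity (A ⊗ₖ B)) (hB : B.trace = 1) : IsDensity A := by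
  refine ⟨?_, ?_⟩
  · simpa [ptraceRight_kronecker, hB] using hAB.1.ptraceRight
  · simpa [trace_kronecker, hB] using hAB.2

end PartialTrace

section Channel

variable {d e : Type*} [Fintype d] [DecidableEq d] [Fintype e] [DecidableEq e]
  {T : Matrix d d ℂ →ₗ[ℂ] Matrix e e ℂ}

lemma IsQChannel.posSemidef_apply (hT : IsQChannel T) {X : Matrix d d ℂ} (hX : X.PosSemidef) :
    (T X).PosSemidef := by
  have hblock := hT.2 Unit (X.submatrix Prod.snd Prod.snd) (hX.submatrix _)
  exact hblock.submatrix fun i => ((), i)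

lemma IsQChannel.isDensity_apply (hT : IsQChannel T) {X : Matrix d d ℂ} (hX : IsDensity X) :
    IsDensity (T X) :=
  ⟨hT.posSemidef_apply hX.1, by rw [hT.1, hX.2]⟩

end Channel

theorem additivity_dpi_implies_catalytic_monotone_general
    (β : ℝ)
    (𝓜 : ∀ (d : Type) [Fintype d] [DecidableEq d], Matrix d d ℂ → Matrix d d ℂ → ℝ)
    (hadd : ∀ (d₁ d₂ : Type) [Fintype d₁] [DecidableEq d₁] [Fintype d₂] [DecidableEq d₂]
        (ρ₁ σ₁ : Matrix d₁ d₁ ℂ) (ρ₂ σ₂ : Matrix d₂ d₂ ℂ),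
        IsDensity ρ₁ → IsDensity ρ₂ → IsFaithfulState σ₁ → IsFaithfulState σ₂ →
        𝓜 (d₁ × d₂) (ρ₁ ⊗ₖ ρ₂) (σ₁ ⊗ₖ σ₂) = 𝓜 d₁ ρ₁ σ₁ + 𝓜 d₂ ρ₂ σ₂)
    (hDPI : ∀ (d e : Type) [Fintype d] [DecidableEq d] [Fintype e] [DecidableEq e]
        (T : Matrix d d ℂ →ₗ[ℂ] Matrix e e ℂ), IsQChannel T →
        ∀ (ρ σ : Matrix d d ℂ), IsDensity ρ → IsFaithfulState σ →
        𝓜 e (T ρ) (T σ) ≤ 𝓜 d ρ σ)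
    {dS dS' dA : Type} [Fintype dS] [DecidableEq dS] [Fintype dS'] [DecidableEq dS']
    [Fintype dA] [DecidableEq dA]
    (G : Matrix (dS × dA) (dS × dA) ℂ →ₗ[ℂ] Matrix (dS' × dA) (dS' × dA) ℂ)
    (hG : IsQChannel G)
    (H : Matrix dS dS ℂ) (K : Matrix dS' dS' ℂ) (R : Matrix dA dA ℂ)
    (hH : H.IsHermitian) (hK : K.IsHermitian) (hR : R.IsHermitian)
    (hGP : G (gibbs β H ⊗ₖ gibbs β R) = gibbs β K ⊗ₖ gibbs β R)
    (ρ : Matrix dS dS ℂ) (hρ : IsDensity ρ)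
    (γ : Matrix dA dA ℂ) (hγ : IsDensity γ)
    (σ : Matrix dS' dS' ℂ)
    (hact : G (ρ ⊗ₖ γ) = σ ⊗ₖ γ) :
    𝓜 dS' σ (gibbs β K) ≤ 𝓜 dS ρ (gibbs β H) := by
  have := hρ.nonempty
  have := hγ.nonempty
  have hργ : IsDensity (ρ ⊗ₖ γ) := hρ.kronecker hγ
  have hσ : IsDensity σ := (hact ▸ hG.isDensity_apply hργ).of_kronecker_right hγ.2
  have := hσ.nonempty
  have hωR := isFaithfulState_gibbs β hR
  have hmono := hDPI _ _ G hG _ _ hργ ((isFaithfulState_gibbs β hH).kronecker hωR)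
  rw [hact, hGP, hadd _ _ _ _ _ _ hσ hγ (isFaithfulState_gibbs β hK) hωR,
    hadd _ _ _ _ _ _ hρ hγ (isFaithfulState_gibbs β hH) hωR] at hmono
  linarith

theorem additivity_dpi_implies_catalytic_monotone
    (β : ℝ) (hβ : 0 < β)
    (𝓜 : ∀ (d : Type) [Fintype d] [DecidableEq d], Matrix d d ℂ → Matrix d d ℂ → ℝ)
    (hadd : ∀ (d₁ d₂ : Type) [Fintype d₁] [DecidableEq d₁] [Fintype d₂] [DecidableEq d₂]
        (ρ₁ σ₁ : Matrix d₁ d₁ ℂ) (ρ₂ σ₂ : Matrix d₂ d₂ ℂ),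
        IsDensity ρ₁ → IsDensity ρ₂ → IsFaithfulState σ₁ → IsFaithfulState σ₂ →
        𝓜 (d₁ × d₂) (ρ₁ ⊗ₖ ρ₂) (σ₁ ⊗ₖ σ₂) = 𝓜 d₁ ρ₁ σ₁ + 𝓜 d₂ ρ₂ σ₂)
    (hDPI : ∀ (d e : Type) [Fintype d] [DecidableEq d] [Fintype e] [DecidableEq e]
        (T : Matrix d d ℂ →ₗ[ℂ] Matrix e e ℂ), IsQChannel T →
        ∀ (ρ σ : Matrix d d ℂ), IsDensity ρ → IsFaithfulState σ →
        𝓜 e (T ρ) (T σ) ≤ 𝓜 d ρ σ)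
    {dS dS' dA : Type} [Fintype dS] [DecidableEq dS] [Fintype dS'] [DecidableEq dS']
    [Fintype dA] [DecidableEq dA]
    (G : Matrix (dS × dA) (dS × dA) ℂ →ₗ[ℂ] Matrix (dS' × dA) (dS' × dA) ℂ)
    (hG : IsQChannel G)
    (H : Matrix dS dS ℂ) (K : Matrix dS' dS' ℂ) (R : Matrix dA dA ℂ)
    (hH : H.IsHermitian) (hK : K.IsHermitian) (hR : R.IsHermitian)
    (hGP : G (gibbs β H ⊗ₖ gibbs β R) = gibbs β K ⊗ₖ gibbs β R)
    (ρ : Matrix dS dS ℂ) (hρ : IsDensity ρ)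
    (γ : Matrix dA dA ℂ) (hγ : IsDensity γ)
    (σ : Matrix dS' dS' ℂ)
    (hact : G (ρ ⊗ₖ γ) = σ ⊗ₖ γ) :
    𝓜 dS' σ (gibbs β K) ≤ 𝓜 dS ρ (gibbs β H) :=
  additivity_dpi_implies_catalytic_monotone_general β 𝓜 hadd hDPI G hG H K R hH hK hR hGP ρ hρ γ hγ
    σ hact

end
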